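/- Let M = M_{Q_2} over ℤ[z_1,…,z_{2n-1}] for the word Q_2 = (n, n-1, …, 2, 1, 2, …, n-1, n). Then for every 1 ≤ α ≤ n, the determinant of the northwest α×α submatrix of M (rows and columns {1,…,α}) equals -(z_n + Σ_{k=1}^{α-1} z_{n-k} z_{n+k}). (Computational core of Proposition 3 for 1 ≤ α ≤ n.) -/

import Mathlib

open Matrix MvPolynomial

/-- For `1 ≤ α ≤ n`, the `(2n+2) × (2n+2)` identity matrix modified by replacing the
`2 × 2` diagonal block in rows/columns `{α, α+1}` (1-based) by `[[-z,1],[1,0]]` and the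
`2 × 2` diagonal block in rows/columns `{2n+2-α, 2n+3-α}` by `[[z,1],[1,0]]`; for
`α = 0`, the identity matrix with the central `4 × 4` diagonal block in rows/columns
`{n, n+1, n+2, n+3}` replaced by `[[-z,0,1,0],[0,z,0,1],[1,0,0,0],[0,1,0,0]]`. -/
def gMat {R : Type*} [CommRing R] (n : ℕ) (α : ℕ) (z : R) :
    Matrix (Fin (2 * n + 2)) (Fin (2 * n + 2)) R :=
  Matrix.of fun i j =>
    let i' := (i : ℕ) + 1
    let j' := (j : ℕ) + 1
    if α = 0 then
      if i' = n ∧ j' = n then -z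
      else if i' = n + 1 ∧ j' = n + 1 then z
      else if (i' = n ∧ j' = n + 2) ∨ (i' = n + 1 ∧ j' = n + 3) ∨
              (i' = n + 2 ∧ j' = n) ∨ (i' = n + 3 ∧ j' = n + 1) then 1
      else if i' = j' ∧ ¬(i' = n ∨ i' = n + 1 ∨ i' = n + 2 ∨ i' = n + 3) then 1
      else 0
    else
      if i' = α ∧ j' = α then -z
      else if i' = 2 * n + 2 - α ∧ j' = 2 * n + 2 - α then z
      else if (i' = α ∧ j' = α + 1) ∨ (i' = α + 1 ∧ j' = α) ∨
              (i' = 2 * n + 2 - α ∧ j' = 2 * n + 3 - α) ∨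
              (i' = 2 * n + 3 - α ∧ j' = 2 * n + 2 - α) then 1
      else if i' = j' ∧
          ¬(i' = α ∨ i' = α + 1 ∨ i' = 2 * n + 2 - α ∨ i' = 2 * n + 3 - α) then 1
      else 0

/-- The descending word `(a, a-1, …, b)`. -/
def descWord (a b : ℕ) : List ℕ := (List.range (a + 1 - b)).reverse.map (· + b)

/-- The ascending word `(a, a+1, …, b)`. -/
def ascWord (a b : ℕ) : List ℕ := (List.range (b + 1 - a)).map (· + a)

/-- `Q_1 = (0, n-1, n-2, …, 2, 1, 2, 3, …, n-1, 0)`. -/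
def wordQ1 (n : ℕ) : List ℕ := 0 :: (descWord (n - 1) 1 ++ ascWord 2 (n - 1) ++ [0])

/-- `Q_2 = (n, n-1, …, 2, 1, 2, …, n-1, n)`. -/
def wordQ2 (n : ℕ) : List ℕ := descWord n 1 ++ ascWord 2 n

/-- `Q^{(i)} = (i, i-1, …, 1, 2, 3, …, n-1, 0, n, n-1, …, i+1)`. -/
def wordQi (n i : ℕ) : List ℕ :=
  descWord i 1 ++ ascWord 2 (n - 1) ++ [0] ++ descWord n (i + 1)

/-- `M_Q = g_{α_1}(z_1) · g_{α_2}(z_2) ⋯ g_{α_L}(z_L)` over `ℤ[z_1, z_2, …]`,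
where `z_j` is the variable `X j`. -/
noncomputable def MQ (n : ℕ) (Q : List ℕ) :
    Matrix (Fin (2 * n + 2)) (Fin (2 * n + 2)) (MvPolynomial ℕ ℤ) :=
  (List.ofFn (fun l : Fin Q.length => gMat n (Q.get l) (X ((l : ℕ) + 1)))).prod

/-- The determinant of the northwest `α × α` submatrix. -/
noncomputable def nwDet {n : ℕ}
    (M : Matrix (Fin (2 * n + 2)) (Fin (2 * n + 2)) (MvPolynomial ℕ ℤ))
    (α : ℕ) (h : α ≤ 2 * n + 2) : MvPolynomial ℕ ℤ :=
  (M.submatrix (Fin.castLE h) (Fin.castLE h)).det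

/-! Every letter of `Q_2` lies in `1, …, n`, and the lower `2 × 2` block of `g_α` sits in rows
`≥ n + 2`, so on the first `n + 1` rows left multiplication by `g_{m+1}(z)` is the row operation
`(r_m, r_{m+1}) ↦ (-z r_m + r_{m+1}, r_m)`. Running these operations along the word from the
right shows that the northwest `n × n` corner of `M_{Q_2}` is an arrow matrix: first row
`(-z_n, -z_{n+1}, …, -z_{2n-1})`, first column `(-z_n, -z_{n-1}, …, -z_1)`, identity elsewhere.
The `α × α` corner is an arrow matrix of the same shape, and an arrow matrix with corner `a`,
first row `b` and first column `c` has determinant `a - Σ b_k c_k` (Schur complement of the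
identity). -/

section arrow

variable {R : Type*} [CommRing R] {k : ℕ}

def arrowMatrix (k : ℕ) (a : R) (b c : ℕ → R) : Matrix (Fin k) (Fin k) R :=
  of fun i j => if (i : ℕ) = 0 then (if (j : ℕ) = 0 then a else b j)
    else if (j : ℕ) = 0 then c i else if i = j then 1 else 0

theorem prod_diag_arrowMatrix (hk : 0 < k) (a : R) (b c : ℕ → R) :
    ∏ i, arrowMatrix k a b c i i = a := by
  rw [Finset.prod_eq_single ⟨0, hk⟩]
  · simp [arrowMatrix]
  · intro i _ hi
    simp [arrowMatrix, Fin.ext_iff.not.mp hi]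
  · simp

theorem det_arrowMatrix_zero_col (hk : 0 < k) (a : R) (b : ℕ → R) :
    (arrowMatrix k a b 0).det = a := by
  rw [det_of_isUpperTriangular, prod_diag_arrowMatrix hk]
  intro i j (hji : j < i)
  have hi : (i : ℕ) ≠ 0 := by have := Fin.lt_def.mp hji; omega
  simp [arrowMatrix, hi, hji.ne']

theorem det_arrowMatrix_zero_row (hk : 0 < k) (a : R) (c : ℕ → R) :
    (arrowMatrix k a 0 c).det = a := by
  rw [det_of_isLowerTriangular _ _, prod_diag_arrowMatrix hk]
  intro i j (hij : i < j)
  have hj : (j : ℕ) ≠ 0 := by have := Fin.lt_def.mp hij; omega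
  simp [arrowMatrix, hj, hij.ne]

theorem arrowMatrix_eq_mul (hk : 0 < k) (a : R) (b c : ℕ → R) :
    arrowMatrix k a b c =
      arrowMatrix k (a - ∑ i ∈ Finset.Ico 1 k, b i * c i) b 0 * arrowMatrix k 1 0 c := by
  set s := ∑ i ∈ Finset.Ico 1 k, b i * c i
  ext i j
  rw [mul_apply]
  by_cases hi : (i : ℕ) = 0
  · by_cases hj : (j : ℕ) = 0
    · have hterm : ∀ l : Fin k, arrowMatrix k (a - s) b 0 i l * arrowMatrix k 1 0 c l j =
          if (l : ℕ) = 0 then a - s else b l * c l := by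
        intro l
        by_cases hl : (l : ℕ) = 0 <;> simp [arrowMatrix, hi, hj, hl]
      rw [Finset.sum_congr rfl fun l _ => hterm l,
        Fin.sum_univ_eq_sum_range (fun l => if l = 0 then a - s else b l * c l),
        Finset.sum_range_eq_add_Ico _ hk, if_pos rfl,
        Finset.sum_congr rfl fun l hl =>
          if_neg (Nat.one_le_iff_ne_zero.mp (Finset.mem_Ico.mp hl).1)]
      simp [arrowMatrix, hi, hj, s]
    · rw [Finset.sum_eq_single j]
      · simp [arrowMatrix, hi, hj]
      · intro l _ hlj
        simp [arrowMatrix, hlj, hj]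
      · simp
  · rw [Finset.sum_eq_single i]
    · simp [arrowMatrix, hi]
    · intro l _ hli
      simp [arrowMatrix, hi, Ne.symm hli]
    · simp

theorem det_arrowMatrix (hk : 0 < k) (a : R) (b c : ℕ → R) :
    (arrowMatrix k a b c).det = a - ∑ i ∈ Finset.Ico 1 k, b i * c i := by
  rw [arrowMatrix_eq_mul hk, det_mul, det_arrowMatrix_zero_col hk, det_arrowMatrix_zero_row hk,
    mul_one]

end arrow

theorem ascWord_succ_self (n : ℕ) : ascWord (n + 1) n = [] := by
  simp [ascWord]

theorem ascWord_eq_cons {a b : ℕ} (h : a ≤ b) : ascWord a b = a :: ascWord (a + 1) b := by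
  rw [ascWord, ascWord, show b + 1 - a = b - a + 1 by omega, List.range_succ_eq_map,
    List.map_cons, List.map_map, show b + 1 - (a + 1) = b - a by omega]
  simp only [zero_add, List.cons.injEq, true_and]
  exact List.map_congr_left fun l _ => by simp only [Function.comp_apply]; omega

theorem descWord_succ_one (m : ℕ) : descWord (m + 1) 1 = (m + 1) :: descWord m 1 := by
  simp [descWord, List.range_succ]

noncomputable def wordProdFrom (n : ℕ) :
    ℕ → List ℕ → Matrix (Fin (2 * n + 2)) (Fin (2 * n + 2)) (MvPolynomial ℕ ℤ)
  | _, [] => 1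
  | s, a :: Q => gMat n a (X s) * wordProdFrom n (s + 1) Q

theorem ofFn_gMat_prod_eq_wordProdFrom (n : ℕ) (Q : List ℕ) (s : ℕ) :
    (List.ofFn fun l : Fin Q.length => gMat n (Q.get l) (X ((l : ℕ) + s))).prod =
      wordProdFrom n s Q := by
  induction Q generalizing s with
  | nil => simp [wordProdFrom]
  | cons a Q ih =>
    rw [List.ofFn_succ, List.prod_cons, wordProdFrom, ← ih (s + 1)]
    simp only [Fin.val_succ, Fin.val_zero, zero_add, add_assoc, add_comm 1 s]
    rfl

theorem MQ_eq_wordProdFrom (n : ℕ) (Q : List ℕ) : MQ n Q = wordProdFrom n 1 Q :=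
  ofFn_gMat_prod_eq_wordProdFrom n Q 1

section rowOps

variable {R : Type*} [CommRing R] {n m : ℕ}

theorem gMat_succ_row_of_le (hm : m < n) (z : R) (i : Fin (2 * n + 2)) (hi : (i : ℕ) ≤ n) :
    gMat n (m + 1) z i =
      if (i : ℕ) = m then Pi.single ⟨m, by omega⟩ (-z) + Pi.single ⟨m + 1, by omega⟩ 1
      else if (i : ℕ) = m + 1 then Pi.single ⟨m, by omega⟩ 1
      else Pi.single i 1 := by
  split_ifs <;>
  · ext k
    simp only [gMat, of_apply, Nat.add_one_ne_zero, if_false, Pi.add_apply, Pi.single_apply,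
      Fin.ext_iff]
    split_ifs <;> first | omega | simp

theorem gMat_succ_mul_apply_of_le (hm : m < n) (z : R)
    (B : Matrix (Fin (2 * n + 2)) (Fin (2 * n + 2)) R) (i j : Fin (2 * n + 2))
    (hi : (i : ℕ) ≤ n) :
    (gMat n (m + 1) z * B) i j =
      if (i : ℕ) = m then -z * B ⟨m, by omega⟩ j + B ⟨m + 1, by omega⟩ j
      else if (i : ℕ) = m + 1 then B ⟨m, by omega⟩ j
      else B i j := by
  rw [mul_apply', gMat_succ_row_of_le hm z i hi]
  split_ifs <;> simp [add_dotProduct]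

end rowOps

theorem wordProdFrom_ascWord_apply {n m : ℕ} (hm : m ≤ n) (i j : Fin (2 * n + 2))
    (hi : (i : ℕ) ≤ n) (hj : (j : ℕ) < n) :
    wordProdFrom n (n + m) (ascWord (m + 1) n) i j =
      if (i : ℕ) < m then (if (j : ℕ) = i then 1 else 0)
      else if (i : ℕ) = m then (if m ≤ (j : ℕ) then -X (n + j) else 0)
      else if (j : ℕ) + 1 = i then 1 else 0 := by
  induction hm using Nat.decreasingInduction generalizing i with
  | self =>
    rw [ascWord_succ_self, wordProdFrom, one_apply]
    simp only [Fin.ext_iff]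
    split_ifs <;> first | rfl | omega
  | of_succ k hk ih =>
    have hcons : wordProdFrom n (n + k) (ascWord (k + 1) n) =
        gMat n (k + 1) (X (n + k)) * wordProdFrom n (n + (k + 1)) (ascWord (k + 1 + 1) n) := by
      rw [ascWord_eq_cons (by omega)]
      rfl
    rw [hcons, gMat_succ_mul_apply_of_le hk _ _ _ _ hi,
      ih ⟨k, by omega⟩ (by simp only; omega), ih ⟨k + 1, by omega⟩ (by simp only; omega),
      ih i hi]
    simp only
    split_ifs <;> first | ring1 | omega | (rw [show (j : ℕ) = k by omega]; ring1)

theorem wordProdFrom_descWord_append_apply {n m : ℕ} (hm1 : 1 ≤ m) (hmn : m ≤ n)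
    (i j : Fin (2 * n + 2)) (hi : (i : ℕ) ≤ n) (hj : (j : ℕ) < n) :
    wordProdFrom n (n + 1 - m) (descWord m 1 ++ ascWord 2 n) i j =
      if (i : ℕ) = 0 then -X (n + j)
      else if (i : ℕ) < m then
        (if (j : ℕ) = 0 then -X (n - i) else if (j : ℕ) = i then 1 else 0)
      else if (i : ℕ) = m then (if (j : ℕ) = 0 then 1 else 0)
      else if (j : ℕ) + 1 = i then 1 else 0 := by
  induction m, hm1 using Nat.le_induction generalizing i with
  | base =>
    have hword : descWord 1 1 ++ ascWord 2 n = ascWord (0 + 1) n :=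
      (ascWord_eq_cons (by omega)).symm
    rw [hword, show n + 1 - 1 = n + 0 by omega,
      wordProdFrom_ascWord_apply (Nat.zero_le n) i j hi hj]
    split_ifs <;> first | rfl | omega
  | succ m hm ih =>
    have hcons : wordProdFrom n (n + 1 - (m + 1)) (descWord (m + 1) 1 ++ ascWord 2 n) =
        gMat n (m + 1) (X (n - m)) *
          wordProdFrom n (n + 1 - m) (descWord m 1 ++ ascWord 2 n) := by
      rw [descWord_succ_one, List.cons_append, show n + 1 - (m + 1) = n - m by omega,
        wordProdFrom, show n - m + 1 = n + 1 - m by omega]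
    rw [hcons, gMat_succ_mul_apply_of_le hmn _ _ _ _ hi,
      ih (by omega) ⟨m, by omega⟩ (by simp only; omega),
      ih (by omega) ⟨m + 1, by omega⟩ (by simp only; omega), ih (by omega) i hi]
    simp only [lt_irrefl, if_false, if_true, show m ≠ 0 by omega,
      Nat.add_one_ne_zero, show ¬(m + 1 < m) by omega, show m + 1 ≠ m by omega]
    split_ifs <;> first | ring1 | omega | (rw [show (i : ℕ) = m by omega]; ring1)

theorem submatrix_MQ_wordQ2_eq_arrowMatrix {n α : ℕ} (hαn : α ≤ n) (h : α ≤ 2 * n + 2) :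
    (MQ n (wordQ2 n)).submatrix (Fin.castLE h) (Fin.castLE h) =
      arrowMatrix α (-X n) (fun j => -X (n + j)) (fun i => -X (n - i)) := by
  have hM : MQ n (wordQ2 n) = wordProdFrom n (n + 1 - n) (descWord n 1 ++ ascWord 2 n) := by
    rw [MQ_eq_wordProdFrom, Nat.add_sub_cancel_left, wordQ2]
  refine Matrix.ext fun i j => ?_
  have hi := i.isLt
  have hj := j.isLt
  rw [submatrix_apply, hM, wordProdFrom_descWord_append_apply (by omega) le_rfl _ _
    (by simp only [Fin.val_castLE]; omega) (by simp only [Fin.val_castLE]; omega)]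
  simp only [Fin.val_castLE, arrowMatrix, of_apply, Fin.ext_iff]
  split_ifs with hi0 hj0 <;> first | rfl | omega | rw [hj0, add_zero]

/-- computational core of Proposition 3 for `1 ≤ α ≤ n`: for
`M = M_{Q_2}` and `1 ≤ α ≤ n`, the determinant of the northwest `α × α` submatrix of
`M` equals `-(z_n + Σ_{k=1}^{α-1} z_{n-k} z_{n+k})`. -/
theorem nwDet_MQ_wordQ2 (n : ℕ) (α : ℕ) (hα1 : 1 ≤ α) (hαn : α ≤ n) :
    nwDet (MQ n (wordQ2 n)) α (by omega) =
      -(X n + ∑ k ∈ Finset.Icc 1 (α - 1), X (n - k) * X (n + k)) := by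
  rw [nwDet, submatrix_MQ_wordQ2_eq_arrowMatrix hαn, det_arrowMatrix hα1,
    Finset.Icc_sub_one_right_eq_Ico_of_not_isMin (by simpa using Nat.one_le_iff_ne_zero.mp hα1)]
  simp only [neg_mul_neg]
  rw [Finset.sum_congr rfl fun k _ => mul_comm (X (n + k)) (X (n - k))]
  ring
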